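/- Let D ⊆ E admit a d-flow and let e ∈ E. Then A(D) = A(D + e) or A(D) = A(D − e); that is, either the unique min-cost d-flow on D ∪ {e, rev e} coincides with A(D), or D ∖ {e, rev e} admits a d-flow and its unique min-cost d-flow coincides with A(D). -/

import Mathlib

open Finset

section Defs

variable {V : Type*}

/-- Reversal of a directed edge. -/
def drev (e : V × V) : V × V := (e.2, e.1)

/-- `K` is a subgraph of the (symmetric) edge set `E`: it contains either both or
neither of `e` and `drev e` for every `e ∈ E`. -/
def IsSubgraph [DecidableEq V] (E K : Finset (V × V)) : Prop :=
  K ⊆ E ∧ ∀ e ∈ E, (e ∈ K ↔ drev e ∈ K)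

/-- `L` is an orientation of the (symmetric) edge set `E`: it contains exactly one of
`e` and `drev e` for every `e ∈ E`. -/
def IsOrientation [DecidableEq V] (E L : Finset (V × V)) : Prop :=
  L ⊆ E ∧ ∀ e ∈ E, (e ∈ L ↔ drev e ∉ L)

variable [Fintype V] [DecidableEq V]

/-- `f` is a `d`-flow on the directed subgraph `D` of the graph with edge set `E`. -/
def IsFlow (E D : Finset (V × V)) (d : V → ℤ) (f : V × V → ℝ) : Prop :=
  (∀ e ∈ E, 0 ≤ f e ∧ f e ≤ 1) ∧
  (∀ e, e ∉ D → f e = 0) ∧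
  ∀ u : V,
    ((Finset.univ.filter (fun v : V => (u, v) ∈ E)).sum fun v => f (u, v)) -
      ((Finset.univ.filter (fun v : V => (v, u) ∈ E)).sum fun v => f (v, u)) = (d u : ℝ)

/-- A `d`-flow exists on `D`. -/
def AdmitsFlow (E D : Finset (V × V)) (d : V → ℤ) : Prop :=
  ∃ f : V × V → ℝ, IsFlow E D d f

/-- The `w`-cost of a flow `f`. -/
def flowCost (E : Finset (V × V)) (w : V × V → ℝ) (f : V × V → ℝ) : ℝ :=
  ∑ e ∈ E, w e * f e

/-- `f` is a min-cost `d`-flow on `D`. -/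
def IsMinCostFlow (E D : Finset (V × V)) (d : V → ℤ) (w : V × V → ℝ)
    (f : V × V → ℝ) : Prop :=
  IsFlow E D d f ∧ ∀ g : V × V → ℝ, IsFlow E D d g → flowCost E w f ≤ flowCost E w g

/-- The `{0,1}`-valued function determined by a set of edges. -/
def ind (S : Finset (V × V)) : V × V → ℝ := fun e => if e ∈ S then 1 else 0

/-- `A` assigns to every flow-admitting `D ⊆ E` the (edge set of the) unique,
`{0,1}`-valued min-cost `d`-flow on `D`. -/
def GoodA (E : Finset (V × V)) (d : V → ℤ) (w : V × V → ℝ)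
    (A : Finset (V × V) → Finset (V × V)) : Prop :=
  ∀ D : Finset (V × V), D ⊆ E → AdmitsFlow E D d →
    IsMinCostFlow E D d w (ind (A D)) ∧
    ∀ f : V × V → ℝ, IsMinCostFlow E D d w f → f = ind (A D)

/-- `A(D) = A(D')`: both `D` and `D'` admit a `d`-flow and their unique min-cost
`d`-flows coincide.  (If one of them admits no `d`-flow this is false.) -/
def AEq (E : Finset (V × V)) (d : V → ℤ) (A : Finset (V × V) → Finset (V × V))
    (D D' : Finset (V × V)) : Prop :=
  AdmitsFlow E D d ∧ AdmitsFlow E D' d ∧ A D = A D'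

/-- `D ⊕ e := (D ∪ {e}) \ {drev e}`. -/
def oplus (D : Finset (V × V)) (e : V × V) : Finset (V × V) := insert e D \ {drev e}

/-- `D + e := D ∪ {e, drev e}`. -/
def padd (D : Finset (V × V)) (e : V × V) : Finset (V × V) := D ∪ {e, drev e}

/-- `D − e := D \ {e, drev e}`. -/
def psub (D : Finset (V × V)) (e : V × V) : Finset (V × V) := D \ {e, drev e}

/-- The representative of `{e, drev e}` lying in the reference orientation `E'`. -/
def chi (E' : Finset (V × V)) (e : V × V) : V × V := if e ∈ E' then e else drev e

/-- The map `φ_e`. -/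
noncomputable def phiE (E : Finset (V × V)) (d : V → ℤ)
    (A : Finset (V × V) → Finset (V × V)) (E' : Finset (V × V))
    (e : V × V) (D : Finset (V × V)) : Finset (V × V) := by
  classical
  exact
    if ¬ AEq E d A D (oplus D e) then oplus D (drev e)
    else if ¬ AEq E d A D (oplus D (drev e)) then oplus D e
    else if e ∈ D then oplus D (chi E' e) else oplus D (drev (chi E' e))

/-- The map `ψ_e`. -/
noncomputable def psiE (E : Finset (V × V)) (d : V → ℤ)
    (A : Finset (V × V) → Finset (V × V)) (E' : Finset (V × V))
    (e : V × V) (D : Finset (V × V)) : Finset (V × V) := by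
  classical
  exact
    if ¬ AEq E d A D (padd D e) then psub D e
    else if ¬ AEq E d A D (psub D e) then padd D e
    else if chi E' e ∈ D then padd D e else psub D e

end Defs

/-!
Let `F = A(D)` and `G = A(D + e)`. If `G` lives on `D`, it is a flow on `D` no more expensive
than `F`, so `G = F`. Otherwise `G` uses a new edge, say `e`, and is strictly cheaper than `F`.
Then `G` does not use `drev e`: cancelling the 2-cycle `e, drev e` would lower its cost, as
weights are positive. Nor does `F`: otherwise the midpoint `(F + G) / 2` carries `1/2` on both
`e` and `drev e`, and cancelling that half 2-cycle leaves a flow on `D` cheaper than `F`. So `F`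
avoids `e` and `drev e`, hence is the min-cost flow on `D − e`.
-/

section MinCostFlow

variable {V : Type*} {E D D' S : Finset (V × V)} {d : V → ℤ} {w : V × V → ℝ}
  {e c : V × V} {f g : V × V → ℝ}

@[simp]
lemma drev_drev (e : V × V) : drev (drev e) = e := rfl

lemma flowCost_add (E : Finset (V × V)) (w f g : V × V → ℝ) :
    flowCost E w (f + g) = flowCost E w f + flowCost E w g := by
  simp only [flowCost, Pi.add_apply, mul_add, sum_add_distrib]

lemma flowCost_smul (E : Finset (V × V)) (w f : V × V → ℝ) (r : ℝ) :
    flowCost E w (r • f) = r * flowCost E w f := by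
  simp only [flowCost, Pi.smul_apply, smul_eq_mul, mul_sum]
  exact sum_congr rfl fun _ _ => by ring

lemma flowCost_sub (E : Finset (V × V)) (w f g : V × V → ℝ) :
    flowCost E w (f - g) = flowCost E w f - flowCost E w g := by
  simp only [flowCost, Pi.sub_apply, mul_sub, sum_sub_distrib]

variable [DecidableEq V]

lemma padd_subset (hD : D ⊆ E) (he : e ∈ E) (hre : drev e ∈ E) : padd D e ⊆ E :=
  union_subset hD (insert_subset he (singleton_subset_iff.2 hre))

lemma psub_padd_subset (D : Finset (V × V)) (e : V × V) : psub (padd D e) e ⊆ D := by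
  intro c
  simp only [psub, padd, mem_sdiff, mem_union]
  tauto

lemma padd_drev (D : Finset (V × V)) (e : V × V) : padd D (drev e) = padd D e := by
  rw [padd, padd, drev_drev, pair_comm]

lemma psub_drev (D : Finset (V × V)) (e : V × V) : psub D (drev e) = psub D e := by
  rw [psub, psub, drev_drev, pair_comm]

lemma ind_of_mem (h : c ∈ S) : ind S c = 1 := if_pos h

lemma ind_of_notMem (h : c ∉ S) : ind S c = 0 := if_neg h

lemma ind_injective : Function.Injective (ind : Finset (V × V) → V × V → ℝ) := by
  intro S T hST
  ext c
  have := congrFun hST c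
  by_cases hS : c ∈ S <;> by_cases hT : c ∈ T <;> simp_all [ind]

lemma ind_pair {a b : V × V} (hab : a ≠ b) : ind {a, b} = ind {a} + ind {b} := by
  ext c
  by_cases ha : c = a <;> by_cases hb : c = b <;> simp_all [ind]

lemma flowCost_ind_singleton (hc : c ∈ E) : flowCost E w (ind {c}) = w c := by
  simp [flowCost, ind, hc]

lemma flowCost_ind_pair (he : e ∈ E) (hre : drev e ∈ E) (hne : e ≠ drev e) :
    flowCost E w (ind {e, drev e}) = w e + w (drev e) := by
  rw [ind_pair hne, flowCost_add, flowCost_ind_singleton he, flowCost_ind_singleton hre]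

variable [Fintype V]

def netOutflow (E : Finset (V × V)) : (V × V → ℝ) →ₗ[ℝ] V → ℝ where
  toFun f u := (∑ v ∈ univ.filter (fun v : V => (u, v) ∈ E), f (u, v)) -
    ∑ v ∈ univ.filter (fun v : V => (v, u) ∈ E), f (v, u)
  map_add' f g := by
    ext u
    simp only [Pi.add_apply, sum_add_distrib]
    ring
  map_smul' r f := by
    ext u
    simp only [Pi.smul_apply, smul_eq_mul, ← mul_sum, RingHom.id_apply]
    ring

lemma IsFlow.netOutflow_eq (hf : IsFlow E D d f) : netOutflow E f = fun u => (d u : ℝ) :=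
  funext hf.2.2

lemma netOutflow_ind_singleton (hc : c ∈ E) (u : V) :
    netOutflow E (ind {c}) u = (if u = c.1 then 1 else 0) - (if u = c.2 then 1 else 0) := by
  simp only [netOutflow, LinearMap.coe_mk, AddHom.coe_mk, ind, mem_singleton, Prod.ext_iff,
    ite_and]
  congr 1
  · split_ifs with hu
    · subst hu
      simp [sum_ite_eq', hc]
    · simp
  · rw [sum_ite_eq']
    split_ifs <;> simp_all

lemma netOutflow_ind_pair (he : e ∈ E) (hre : drev e ∈ E) (hne : e ≠ drev e) :
    netOutflow E (ind {e, drev e}) = 0 := by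
  ext u
  rw [ind_pair hne, map_add, Pi.add_apply, netOutflow_ind_singleton he,
    netOutflow_ind_singleton hre]
  by_cases h1 : u = e.1 <;> by_cases h2 : u = e.2 <;> simp [drev, h1, h2]

lemma IsFlow.mono (hf : IsFlow E D d f) (hDD' : D ⊆ D') : IsFlow E D' d f :=
  ⟨hf.1, fun c hc => hf.2.1 c (fun h => hc (hDD' h)), hf.2.2⟩

lemma IsFlow.subset_of_ind (hS : IsFlow E D d (ind S)) : S ⊆ D := by
  intro c hc
  by_contra hcD
  have := hS.2.1 c hcD
  rw [ind_of_mem hc] at this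
  exact one_ne_zero this

lemma convex_setOf_isFlow (E D : Finset (V × V)) (d : V → ℤ) :
    Convex ℝ {f | IsFlow E D d f} := by
  intro f hf g hg a b ha hb hab
  refine ⟨fun c hc => ?_, fun c hc => ?_, fun u => ?_⟩
  · have := hf.1 c hc
    have := hg.1 c hc
    simp only [Pi.add_apply, Pi.smul_apply, smul_eq_mul]
    constructor <;> nlinarith
  · simp [hf.2.1 c hc, hg.2.1 c hc]
  · change netOutflow E (a • f + b • g) u = d u
    rw [map_add, map_smul, map_smul, hf.netOutflow_eq, hg.netOutflow_eq]
    simp only [Pi.add_apply, Pi.smul_apply, smul_eq_mul]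
    rw [← add_mul, hab, one_mul]

lemma IsFlow.sub_ind_pair (hf : IsFlow E D d f) (he : e ∈ E) (hre : drev e ∈ E)
    (hne : e ≠ drev e) {r : ℝ} (hfe : f e = r) (hfre : f (drev e) = r) :
    IsFlow E (psub D e) d (f - r • ind {e, drev e}) := by
  have hval : ∀ c, (f - r • ind {e, drev e}) c =
      if c ∈ ({e, drev e} : Finset _) then 0 else f c := by
    intro c
    simp only [Pi.sub_apply, Pi.smul_apply, smul_eq_mul, ind]
    split_ifs with hc
    · rcases mem_insert.1 hc with rfl | hc
      · rw [hfe, mul_one, sub_self]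
      · rw [mem_singleton.1 hc, hfre, mul_one, sub_self]
    · rw [mul_zero, sub_zero]
  refine ⟨fun c hc => ?_, fun c hc => ?_, fun u => ?_⟩
  · rw [hval]
    split_ifs
    · simp
    · exact hf.1 c hc
  · rw [hval]
    split_ifs with hce
    · rfl
    · exact hf.2.1 c fun hcD => hc (mem_sdiff.2 ⟨hcD, hce⟩)
  · change netOutflow E (f - r • ind {e, drev e}) u = d u
    rw [map_sub, map_smul, netOutflow_ind_pair he hre hne, smul_zero, sub_zero]
    exact hf.2.2 u

lemma AdmitsFlow.mono (h : AdmitsFlow E D d) (hDD' : D ⊆ D') : AdmitsFlow E D' d :=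
  let ⟨f, hf⟩ := h
  ⟨f, hf.mono hDD'⟩

lemma IsFlow.ind_of_subset (hS : IsFlow E D' d (ind S)) (hSD : S ⊆ D) : IsFlow E D d (ind S) :=
  ⟨hS.1, fun _ hc => ind_of_notMem fun h => hc (hSD h), hS.2.2⟩

lemma IsMinCostFlow.cost_le_sub_pair (hf : IsMinCostFlow E D d w f) (hg : IsFlow E D' d g)
    (hD' : psub D' e ⊆ D) (he : e ∈ E) (hre : drev e ∈ E) (hne : e ≠ drev e) {r : ℝ}
    (hge : g e = r) (hgre : g (drev e) = r) :
    flowCost E w f ≤ flowCost E w g - r * (w e + w (drev e)) := by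
  have := hf.2 _ ((hg.sub_ind_pair he hre hne hge hgre).mono hD')
  rwa [flowCost_sub, flowCost_smul, flowCost_ind_pair he hre hne] at this

lemma IsMinCostFlow.of_cost_le (hf : IsMinCostFlow E D d w f) (hg : IsFlow E D d g)
    (hgf : flowCost E w g ≤ flowCost E w f) : IsMinCostFlow E D d w g :=
  ⟨hg, fun k hk => hgf.trans (hf.2 k hk)⟩

lemma IsMinCostFlow.anti (hf : IsMinCostFlow E D d w f) (hf' : IsFlow E D' d f)
    (hD' : D' ⊆ D) : IsMinCostFlow E D' d w f :=
  ⟨hf', fun k hk => hf.2 k (hk.mono hD')⟩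

variable {A : Finset (V × V) → Finset (V × V)}

lemma GoodA.subset (hA : GoodA E d w A) (hD : D ⊆ E) (hDf : AdmitsFlow E D d) : A D ⊆ D :=
  (hA D hD hDf).1.1.subset_of_ind

lemma aEq_padd_of_subset (hA : GoodA E d w A) (hD : D ⊆ E) (hDf : AdmitsFlow E D d)
    (he : e ∈ E) (hre : drev e ∈ E) (hAD : A (padd D e) ⊆ D) : AEq E d A D (padd D e) := by
  obtain ⟨hF, hFuniq⟩ := hA D hD hDf
  have hFe : IsFlow E (padd D e) d (ind (A D)) := hF.1.mono subset_union_left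
  obtain ⟨hG, -⟩ := hA (padd D e) (padd_subset hD he hre) ⟨_, hFe⟩
  have hGD := hF.of_cost_le (hG.1.ind_of_subset hAD) (hG.2 _ hFe)
  exact ⟨hDf, ⟨_, hFe⟩, (ind_injective (hFuniq _ hGD)).symm⟩

lemma aEq_psub_of_mem_padd (hA : GoodA E d w A) (hw : 0 < w e + w (drev e)) (hD : D ⊆ E)
    (hDf : AdmitsFlow E D d) (he : e ∈ E) (hre : drev e ∈ E) (hne : e ≠ drev e)
    (heA : e ∈ A (padd D e)) (heD : e ∉ D) : AEq E d A D (psub D e) := by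
  obtain ⟨hF, -⟩ := hA D hD hDf
  have hFe : IsFlow E (padd D e) d (ind (A D)) := hF.1.mono subset_union_left
  obtain ⟨hG, hGuniq⟩ := hA (padd D e) (padd_subset hD he hre) ⟨_, hFe⟩
  have hAD : A D ⊆ D := hF.1.subset_of_ind
  have heF : e ∉ A D := fun h => heD (hAD h)
  have hreG : drev e ∉ A (padd D e) := fun hreG => by
    have := hG.cost_le_sub_pair hG.1 sdiff_subset he hre hne (ind_of_mem heA) (ind_of_mem hreG)
    linarith
  have hlt : flowCost E w (ind (A (padd D e))) < flowCost E w (ind (A D)) := by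
    refine (hG.2 _ hFe).lt_of_ne fun hcost => heF ?_
    rwa [ind_injective (hGuniq _ (hG.of_cost_le hFe hcost.ge))]
  have hreF : drev e ∉ A D := fun hreF => by
    have hmid := convex_setOf_isFlow E (padd D e) d hFe hG.1 (a := 1 / 2) (b := 1 / 2)
      (by norm_num) (by norm_num) (by norm_num)
    have := hF.cost_le_sub_pair hmid (psub_padd_subset D e) he hre hne (r := 1 / 2)
      (by simp [ind_of_notMem heF, ind_of_mem heA])
      (by simp [ind_of_mem hreF, ind_of_notMem hreG])
    rw [flowCost_add, flowCost_smul, flowCost_smul] at this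
    linarith
  have hFsub : IsFlow E (psub D e) d (ind (A D)) := by
    simpa using hF.1.sub_ind_pair he hre hne (r := 0) (ind_of_notMem heF) (ind_of_notMem hreF)
  obtain ⟨-, hPuniq⟩ := hA (psub D e) (sdiff_subset.trans hD) ⟨_, hFsub⟩
  exact ⟨hDf, ⟨_, hFsub⟩, ind_injective (hPuniq _ (hF.anti hFsub sdiff_subset))⟩

end MinCostFlow

theorem minCostFlow_padd_or_psub_general
    {V : Type*} [Fintype V] [DecidableEq V]
    (E : Finset (V × V)) (hE_symm : ∀ e, e ∈ E ↔ drev e ∈ E)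
    (hE_ne : ∀ e ∈ E, e.1 ≠ e.2)
    (d : V → ℤ)
    (w : V × V → ℝ) (hw : ∀ e ∈ E, 0 < w e)
    (A : Finset (V × V) → Finset (V × V)) (hA : GoodA E d w A)
    (D : Finset (V × V)) (hD : D ⊆ E) (hDf : AdmitsFlow E D d)
    (e : V × V) (he : e ∈ E) :
    AEq E d A D (padd D e) ∨ AEq E d A D (psub D e) := by
  have hre : drev e ∈ E := (hE_symm e).1 he
  by_cases hAD : A (padd D e) ⊆ D
  · exact Or.inl (aEq_padd_of_subset hA hD hDf he hre hAD)
  right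
  obtain ⟨x, hxA, hxD⟩ := not_subset.1 hAD
  have hx : x = e ∨ x = drev e := by
    simpa [padd, hxD] using hA.subset (padd_subset hD he hre) (hDf.mono subset_union_left) hxA
  have hne : ∀ c ∈ E, c ≠ drev c := fun c hc h => hE_ne c hc (congrArg Prod.fst h)
  have hw_pair : ∀ c ∈ E, 0 < w c + w (drev c) := fun c hc =>
    add_pos (hw c hc) (hw _ ((hE_symm c).1 hc))
  obtain rfl | rfl := hx
  · exact aEq_psub_of_mem_padd hA (hw_pair x he) hD hDf he hre (hne x he) hxA hxD
  · rw [← padd_drev] at hxA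
    rw [← psub_drev]
    exact aEq_psub_of_mem_padd hA (hw_pair _ hre) hD hDf hre (by rwa [drev_drev]) (hne _ hre)
      hxA hxD

theorem minCostFlow_padd_or_psub
    {V : Type*} [Fintype V] [DecidableEq V]
    (E : Finset (V × V)) (hE_symm : ∀ e, e ∈ E ↔ drev e ∈ E)
    (hE_ne : ∀ e ∈ E, e.1 ≠ e.2)
    (d : V → ℤ) (hd : ∑ u : V, d u = 0)
    (w : V × V → ℝ) (hw : ∀ e ∈ E, 0 < w e)
    (A : Finset (V × V) → Finset (V × V)) (hA : GoodA E d w A)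
    (D : Finset (V × V)) (hD : D ⊆ E) (hDf : AdmitsFlow E D d)
    (e : V × V) (he : e ∈ E) :
    AEq E d A D (padd D e) ∨ AEq E d A D (psub D e) :=
  minCostFlow_padd_or_psub_general E hE_symm hE_ne d w hw A hA D hD hDf e he
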